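/- arXiv:1810.08316 — 5 statements merged into one kernel-verified Lean document; each statement's English description precedes it below -/
import Mathlib

section
/- The constant 2 in the inequality ‖Δ(M)‖ ≤ 2‖M‖ is sharp: for every p ≥ 2, the matrix M = 1_p 1_p^⊤ − (p/2) I_p satisfies ‖Δ(M)‖/‖M‖ = 2 − 2/p. Consequently, for any ε > 0 there exists a symmetric matrix M with ‖Δ(M)‖ > (2−ε)‖M‖. -/
open scoped Matrix.Norms.L2Operator

/-- `offDiag' M` is the matrix `M` with all diagonal entries set to zero. -/
def Matrix.offDiag' {p : ℕ} (M : Matrix (Fin p) (Fin p) ℝ) : Matrix (Fin p) (Fin p) ℝ :=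
  fun i j => if i = j then 0 else M i j

/-!
For the all-ones matrix `J` of size `n`, `‖(J - c • 1) x‖² = (n - 2c) (∑ x)² + c² ‖x‖²`.
Cauchy–Schwarz, `(∑ x)² ≤ n ‖x‖²`, bounds this by `max ((n - c)², c²) ‖x‖²`, and the bound is
attained at the constant vector and at any nonzero vector with zero sum, so
`‖J - c • 1‖ = max |n - c| |c|`. Removing the diagonal of `M = J - (p/2) • 1` leaves `J - 1`,
so `‖Δ(M)‖ = p - 1` while `‖M‖ = p/2`.
-/

namespace Matrix

section L2OpNorm

variable {m n : Type*} [Fintype m] [Fintype n]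

lemma norm_toLp_sq (x : n → ℝ) : ‖WithLp.toLp 2 x‖ ^ 2 = ∑ i, x i ^ 2 := by
  simp [EuclideanSpace.norm_sq_eq, sq_abs]

variable [DecidableEq n]

lemma l2_opNorm_le_of_sum_sq_mulVec_le (A : Matrix m n ℝ) {K : ℝ} (hK : 0 ≤ K)
    (h : ∀ x : n → ℝ, ∑ i, (A *ᵥ x) i ^ 2 ≤ K ^ 2 * ∑ j, x j ^ 2) : ‖A‖ ≤ K := by
  rw [l2_opNorm_def]
  refine ContinuousLinearMap.opNorm_le_bound _ hK fun x => ?_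
  refine le_of_sq_le_sq ?_ (by positivity)
  have hx := h x.ofLp
  rw [← norm_toLp_sq, ← norm_toLp_sq] at hx
  rwa [mul_pow]

lemma abs_le_l2_opNorm_of_sum_sq_mulVec_ge (A : Matrix m n ℝ) {K : ℝ} {x : n → ℝ}
    (hx : x ≠ 0) (h : K ^ 2 * ∑ j, x j ^ 2 ≤ ∑ i, (A *ᵥ x) i ^ 2) : |K| ≤ ‖A‖ := by
  have hx₀ : 0 < ‖WithLp.toLp 2 x‖ ^ 2 := by
    have : WithLp.toLp 2 x ≠ 0 := by simpa using hx
    positivity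
  have hAx : ‖WithLp.toLp 2 (A *ᵥ x)‖ ≤ ‖A‖ * ‖WithLp.toLp 2 x‖ := l2_opNorm_mulVec A _
  refine abs_le_of_sq_le_sq (le_of_mul_le_mul_right ?_ hx₀) (norm_nonneg A)
  rw [norm_toLp_sq]
  refine h.trans ((norm_toLp_sq _).symm.trans_le ?_)
  rw [← norm_toLp_sq, ← mul_pow]
  exact pow_le_pow_left₀ (norm_nonneg _) hAx 2

end L2OpNorm

section AllOnes

variable {n : Type*} [Fintype n] [DecidableEq n]

lemma allOnes_sub_smul_one_mulVec (c : ℝ) (x : n → ℝ) :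
    (of (fun _ _ => (1 : ℝ)) - c • (1 : Matrix n n ℝ)) *ᵥ x = fun i => ∑ j, x j - c * x i := by
  rw [sub_mulVec, smul_mulVec, one_mulVec]
  ext i
  simp [mulVec, dotProduct]

lemma sum_sq_allOnes_sub_smul_one_mulVec (c : ℝ) (x : n → ℝ) :
    ∑ i, ((of (fun _ _ => (1 : ℝ)) - c • (1 : Matrix n n ℝ)) *ᵥ x) i ^ 2
      = (Fintype.card n - 2 * c) * (∑ j, x j) ^ 2 + c ^ 2 * ∑ j, x j ^ 2 := by
  simp only [allOnes_sub_smul_one_mulVec, sub_sq, Finset.sum_add_distrib, Finset.sum_sub_distrib,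
    Finset.sum_const, Finset.card_univ, nsmul_eq_mul, mul_pow, ← Finset.mul_sum]
  ring

theorem l2_opNorm_allOnes_sub_smul_one [Nontrivial n] (c : ℝ) :
    ‖of (fun _ _ => (1 : ℝ)) - c • (1 : Matrix n n ℝ)‖ = max |Fintype.card n - c| |c| := by
  set K := max |(Fintype.card n : ℝ) - c| |c|
  refine le_antisymm (l2_opNorm_le_of_sum_sq_mulVec_le _ (by positivity) fun x => ?_) (max_le ?_ ?_)
  · rw [sum_sq_allOnes_sub_smul_one_mulVec]
    have hcs : (∑ j, x j) ^ 2 ≤ Fintype.card n * ∑ j, x j ^ 2 := by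
      simpa using sq_sum_le_card_mul_sum_sq (s := Finset.univ) (f := x)
    have hq : 0 ≤ ∑ j, x j ^ 2 := by positivity
    have hK₁ : (Fintype.card n - c) ^ 2 ≤ K ^ 2 := sq_le_sq' (by grind) (by grind)
    have hK₂ : c ^ 2 ≤ K ^ 2 := sq_le_sq' (by grind) (by grind)
    rcases le_total 0 (Fintype.card n - 2 * c) with h | h <;> nlinarith
  · refine abs_le_l2_opNorm_of_sum_sq_mulVec_ge _ (x := fun _ => 1) one_ne_zero (le_of_eq ?_)
    rw [sum_sq_allOnes_sub_smul_one_mulVec]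
    simp only [one_pow, Finset.sum_const, Finset.card_univ, nsmul_eq_mul, mul_one]
    ring
  · obtain ⟨i, j, hij⟩ := exists_pair_ne n
    have hx : Pi.single i 1 - Pi.single j 1 ≠ (0 : n → ℝ) := fun h => by
      simpa [hij] using congrFun h i
    refine abs_le_l2_opNorm_of_sum_sq_mulVec_ge _ hx (le_of_eq ?_)
    rw [sum_sq_allOnes_sub_smul_one_mulVec]
    simp [Finset.sum_sub_distrib]

end AllOnes

lemma offDiag'_allOnes_sub_smul_one {p : ℕ} (c : ℝ) :
    offDiag' (of (fun _ _ => (1 : ℝ)) - c • (1 : Matrix (Fin p) (Fin p) ℝ))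
      = of (fun _ _ => (1 : ℝ)) - (1 : ℝ) • (1 : Matrix (Fin p) (Fin p) ℝ) := by
  ext i j
  by_cases h : i = j <;> simp [offDiag', h]

lemma l2_opNorm_offDiag'_allOnes_sub_smul_one {p : ℕ} (hp : 2 ≤ p) (c : ℝ) :
    ‖offDiag' (of (fun _ _ => (1 : ℝ)) - c • (1 : Matrix (Fin p) (Fin p) ℝ))‖ = p - 1 := by
  have : Nontrivial (Fin p) := Fin.nontrivial_iff_two_le.mpr hp
  have hp' : (2 : ℝ) ≤ p := by exact_mod_cast hp
  rw [offDiag'_allOnes_sub_smul_one, l2_opNorm_allOnes_sub_smul_one, Fintype.card_fin]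
  simp only [abs_one]
  rw [abs_of_nonneg (by linarith), max_eq_left (by linarith)]

lemma l2_opNorm_allOnes_sub_half_smul_one {p : ℕ} (hp : 2 ≤ p) :
    ‖of (fun _ _ => (1 : ℝ)) - ((p : ℝ) / 2) • (1 : Matrix (Fin p) (Fin p) ℝ)‖ = p / 2 := by
  have : Nontrivial (Fin p) := Fin.nontrivial_iff_two_le.mpr hp
  rw [l2_opNorm_allOnes_sub_smul_one, Fintype.card_fin, sub_half, max_self,
    abs_of_nonneg (by positivity)]

end Matrix

open Matrix

/-- Sharpness of the factor 2 in `‖Δ(M)‖ ≤ 2‖M‖` : for every `p ≥ 2`, the matrix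
`M = 1ₚ1ₚᵀ − (p/2) Iₚ` satisfies `‖Δ(M)‖ / ‖M‖ = 2 − 2/p`; consequently, for any `ε > 0`
there is a symmetric matrix `M` with `‖Δ(M)‖ > (2 − ε) ‖M‖`. -/
theorem offDiag_l2OpNorm_two_sharp :
    (∀ p : ℕ, 2 ≤ p →
      ∀ M : Matrix (Fin p) (Fin p) ℝ,
        M = Matrix.of (fun _ _ => (1 : ℝ)) - ((p : ℝ) / 2) • (1 : Matrix (Fin p) (Fin p) ℝ) →
        ‖Matrix.offDiag' M‖ / ‖M‖ = 2 - 2 / p) ∧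
    (∀ ε : ℝ, 0 < ε →
      ∃ (p : ℕ) (M : Matrix (Fin p) (Fin p) ℝ),
        M.IsSymm ∧ (2 - ε) * ‖M‖ < ‖Matrix.offDiag' M‖) := by
  refine ⟨fun p hp M hM => ?_, fun ε hε => ?_⟩
  · have hp' : (0 : ℝ) < p := by positivity
    rw [hM, l2_opNorm_offDiag'_allOnes_sub_smul_one hp, l2_opNorm_allOnes_sub_half_smul_one hp]
    field_simp
  · obtain ⟨p, hp⟩ := exists_nat_gt (max 2 (2 / ε))
    have hp₂ : 2 ≤ p := by exact_mod_cast (le_max_left _ _).trans hp.le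
    have hεp : 2 < ε * p := (div_lt_iff₀' hε).mp ((le_max_right _ _).trans_lt hp)
    refine ⟨p, of (fun _ _ => (1 : ℝ)) - ((p : ℝ) / 2) • (1 : Matrix (Fin p) (Fin p) ℝ),
      (IsSymm.ext fun _ _ => rfl).sub (isSymm_one.smul _), ?_⟩
    rw [l2_opNorm_offDiag'_allOnes_sub_smul_one hp₂, l2_opNorm_allOnes_sub_half_smul_one hp₂]
    linarith
end

section
/- Let G ⊆ [m₁]×[m₂] be a b-sparse index set, i.e., every row index appears in at most b pairs of G and every column index appears in at most b pairs. For a matrix M ∈ ℝ^{m₁×m₂}, let G(M) denote M with all entries outside G set to zero. Then ‖G(M)‖ ≤ √b · ‖M‖. -/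
open scoped Matrix.Norms.L2Operator

/-- `restrict G M` is the matrix `M` with all entries outside the index set `G` set to zero. -/
def Matrix.restrict {m₁ m₂ : ℕ} (G : Finset (Fin m₁ × Fin m₂))
    (M : Matrix (Fin m₁) (Fin m₂) ℝ) : Matrix (Fin m₁) (Fin m₂) ℝ :=
  fun i j => if (i, j) ∈ G then M i j else 0

/-- `G` is `b`-sparse: every row index appears in at most `b` pairs of `G`,
and every column index appears in at most `b` pairs of `G`. -/
def Matrix.BSparse {m₁ m₂ : ℕ} (G : Finset (Fin m₁ × Fin m₂)) (b : ℕ) : Prop :=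
  (∀ i : Fin m₁, (G.filter (fun q => q.1 = i)).card ≤ b) ∧
  (∀ j : Fin m₂, (G.filter (fun q => q.2 = j)).card ≤ b)

/-! By the Schur test, `‖A‖ ≤ √(R C)` whenever every row of `A` has `ℓ¹`-norm at most `R` and
every column at most `C`. A row of `G(M)` has at most `b` nonzero entries, so by Cauchy–Schwarz its
`ℓ¹`-norm is at most `√b` times the `ℓ²`-norm of the corresponding row of `M`, which is at most
`‖M‖`; likewise for columns. -/

open Finset Matrix

lemma Finset.sq_sum_mul_le_sum_abs_mul_sum_abs_mul_sq {ι : Type*} (s : Finset ι)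
    (a x : ι → ℝ) :
    (∑ i ∈ s, a i * x i) ^ 2 ≤ (∑ i ∈ s, |a i|) * ∑ i ∈ s, |a i| * x i ^ 2 :=
  sum_sq_le_sum_mul_sum_of_sq_le_mul s (fun _ _ => abs_nonneg _) (fun _ _ => by positivity)
    fun i _ => le_of_eq (by rw [mul_pow, ← sq_abs (a i)]; ring)

lemma Finset.sum_abs_ite_le_sqrt_mul_sqrt_sum_sq {ι : Type*} [Fintype ι] (p : ι → Prop)
    [DecidablePred p] (f : ι → ℝ) {b : ℕ} (hp : #{i | p i} ≤ b) :
    ∑ i, |if p i then f i else 0| ≤ √b * √(∑ i, f i ^ 2) := by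
  calc ∑ i, |if p i then f i else 0| = ∑ i ∈ {i | p i}, |f i| := by
        rw [sum_filter]; simp only [apply_ite, abs_zero]
    _ ≤ √(#{i | p i} * ∑ i ∈ {i | p i}, |f i| ^ 2) :=
        Real.le_sqrt_of_sq_le (sq_sum_le_card_mul_sum_sq ..)
    _ ≤ √(b * ∑ i, f i ^ 2) := by
        simp only [sq_abs]
        gcongr
        exact subset_univ _
    _ = √b * √(∑ i, f i ^ 2) := Real.sqrt_mul (Nat.cast_nonneg b) _

namespace Matrix

variable {m n : Type*} [Fintype m] [Fintype n]

lemma sum_mulVec_sq_le (A : Matrix m n ℝ) (x : n → ℝ) {R C : ℝ} (hR₀ : 0 ≤ R)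
    (hR : ∀ i, ∑ j, |A i j| ≤ R) (hC : ∀ j, ∑ i, |A i j| ≤ C) :
    ∑ i, (A *ᵥ x) i ^ 2 ≤ R * C * ∑ j, x j ^ 2 :=
  calc ∑ i, (A *ᵥ x) i ^ 2 ≤ ∑ i, R * ∑ j, |A i j| * x j ^ 2 := by
        gcongr with i
        exact (sq_sum_mul_le_sum_abs_mul_sum_abs_mul_sq _ (A i) x).trans
          (mul_le_mul_of_nonneg_right (hR i) (by positivity))
    _ = R * ∑ j, (∑ i, |A i j|) * x j ^ 2 := by
        rw [← mul_sum, sum_comm]; simp only [sum_mul]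
    _ ≤ R * ∑ j, C * x j ^ 2 := by gcongr with j; exact hC j
    _ = R * C * ∑ j, x j ^ 2 := by rw [← mul_sum, mul_assoc]

lemma l2_opNorm_le_sqrt_mul_of_sum_abs_le [DecidableEq n] (A : Matrix m n ℝ) {R C : ℝ}
    (hR₀ : 0 ≤ R) (hR : ∀ i, ∑ j, |A i j| ≤ R) (hC : ∀ j, ∑ i, |A i j| ≤ C) :
    ‖A‖ ≤ √(R * C) := by
  rw [l2_opNorm_def]
  refine ContinuousLinearMap.opNorm_le_bound _ (Real.sqrt_nonneg _) fun x => ?_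
  rw [← Real.sqrt_sq (norm_nonneg x), ← Real.sqrt_mul' _ (sq_nonneg _)]
  refine Real.le_sqrt_of_sq_le ?_
  simpa [EuclideanSpace.norm_sq_eq] using sum_mulVec_sq_le A x hR₀ hR hC

lemma sqrt_sum_sq_col_le_l2_opNorm [DecidableEq n] (M : Matrix m n ℝ) (j : n) :
    √(∑ i, M i j ^ 2) ≤ ‖M‖ := by
  simpa [EuclideanSpace.norm_eq] using M.l2_opNorm_mulVec (EuclideanSpace.single j 1)

lemma sqrt_sum_sq_row_le_l2_opNorm [DecidableEq m] [DecidableEq n] (M : Matrix m n ℝ) (i : m) :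
    √(∑ j, M i j ^ 2) ≤ ‖M‖ := by
  have h := Mᴴ.sqrt_sum_sq_col_le_l2_opNorm i
  rw [l2_opNorm_conjTranspose] at h
  simpa using h

end Matrix

namespace Matrix.BSparse

variable {m₁ m₂ b : ℕ} {G : Finset (Fin m₁ × Fin m₂)}

lemma card_row_le (hG : BSparse G b) (i : Fin m₁) : #{j | (i, j) ∈ G} ≤ b :=
  (card_le_card_of_injOn (fun j => (i, j)) (fun j hj => by simpa using hj)
    fun _ _ _ _ h => (Prod.ext_iff.1 h).2).trans (hG.1 i)

lemma card_col_le (hG : BSparse G b) (j : Fin m₂) : #{i | (i, j) ∈ G} ≤ b :=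
  (card_le_card_of_injOn (fun i => (i, j)) (fun i hi => by simpa using hi)
    fun _ _ _ _ h => (Prod.ext_iff.1 h).1).trans (hG.2 j)

end Matrix.BSparse

/-- If `G ⊆ [m₁]×[m₂]` is `b`-sparse, then zeroing out all entries of `M` outside `G`
shrinks the spectral norm up to a factor `√b` :  `‖G(M)‖ ≤ √b ‖M‖`. -/
theorem restrict_l2OpNorm_le_sqrt_sparsity {m₁ m₂ b : ℕ}
    (G : Finset (Fin m₁ × Fin m₂)) (hG : Matrix.BSparse G b)
    (M : Matrix (Fin m₁) (Fin m₂) ℝ) :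
    ‖Matrix.restrict G M‖ ≤ Real.sqrt b * ‖M‖ := by
  have hrow : ∀ i, ∑ j, |restrict G M i j| ≤ √b * ‖M‖ := fun i =>
    (sum_abs_ite_le_sqrt_mul_sqrt_sum_sq (fun j => (i, j) ∈ G) (M i) (hG.card_row_le i)).trans
      (mul_le_mul_of_nonneg_left (M.sqrt_sum_sq_row_le_l2_opNorm i) (Real.sqrt_nonneg _))
  have hcol : ∀ j, ∑ i, |restrict G M i j| ≤ √b * ‖M‖ := fun j =>
    (sum_abs_ite_le_sqrt_mul_sqrt_sum_sq (fun i => (i, j) ∈ G) (M · j) (hG.card_col_le j)).trans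
      (mul_le_mul_of_nonneg_left (M.sqrt_sum_sq_col_le_l2_opNorm j) (Real.sqrt_nonneg _))
  have hbound : 0 ≤ √b * ‖M‖ := by positivity
  calc ‖restrict G M‖ ≤ √((√b * ‖M‖) * (√b * ‖M‖)) :=
        l2_opNorm_le_sqrt_mul_of_sum_abs_le _ hbound hrow hcol
    _ = √b * ‖M‖ := Real.sqrt_mul_self hbound
end

section
/- Let L ≥ 2, a > 0, b ≥ 0, and consider the symmetric matrix A = 1_L 1_L^⊤ + a√L·e₁e₁^⊤ + b(e₁1_L^⊤ + 1_L e₁^⊤) ∈ ℝ^{L×L}. Let û be the leading eigenvector of A, and u = L^{-1/2}·1_L. Then ‖sin Θ(û, u)‖ ≥ c(a ∧ 1)/L for some universal constant c > 0 (one can take c = 1/(10√2)). -/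
open Matrix

/-!
Since `A` is a nonzero symmetric matrix, its leading eigenvalue `μ` is nonzero, and then the
eigen-equations at the rows `i ≠ 0`, which all read `μ x i = ∑ x + b x₀`, force a leading
eigenvector to be constant off the first coordinate: `û = w 1 + d e₁`. Eliminating `μ` from the
two remaining eigen-equations leaves one quadratic relation between `w` and `d`, and together with
`‖û‖ = 1` (so `w ≈ ±1/√L` when `d` is small) it rules out `|d| < (a ∧ 1)/(10L)`. Finally
`1 - (ûᵀu)² = (1 - 1/L) d²`.
-/

/-- `1 1ᵀ + c e₁e₁ᵀ + b (e₁1ᵀ + 1e₁ᵀ)`; the theorem concerns `c = a√L`. -/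
def perturbedOnes (L : ℕ) (c b : ℝ) : Matrix (Fin L) (Fin L) ℝ :=
  fun i j => 1 + (if (i : ℕ) = 0 ∧ (j : ℕ) = 0 then c else 0)
    + (if (i : ℕ) = 0 then b else 0) + (if (j : ℕ) = 0 then b else 0)

lemma Matrix.IsHermitian.ne_zero_of_forall_abs_eigenvalue_le {n : Type*} [Fintype n]
    {A : Matrix n n ℝ} (hA : A.IsHermitian) (h0 : A ≠ 0) {μ : ℝ}
    (hmax : ∀ (ν : ℝ) (v : n → ℝ), v ≠ 0 → A *ᵥ v = ν • v → |ν| ≤ |μ|) :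
    μ ≠ 0 := by
  obtain ⟨v, ν, hν, hv, hAv⟩ := hA.exists_eigenvector_of_ne_zero h0
  rintro rfl
  exact hν (abs_nonpos_iff.mp (by simpa using hmax ν v hv hAv))

section ConstAddSingle

variable {L : ℕ} [NeZero L] (w d : ℝ)

lemma sum_const_add_ite_zero : ∑ i : Fin L, (w + if i = 0 then d else 0) = L * w + d := by
  simp [Finset.sum_add_distrib]

lemma sum_sq_const_add_ite_zero :
    ∑ i : Fin L, (w + if i = 0 then d else 0) ^ 2 = L * w ^ 2 + 2 * w * d + d ^ 2 := by
  have h : ∀ i : Fin L, (w + if i = 0 then d else 0) ^ 2 =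
      w ^ 2 + if i = 0 then 2 * w * d + d ^ 2 else 0 := by
    intro i; split_ifs <;> ring
  simp only [h, Finset.sum_add_distrib, Finset.sum_ite_eq', Finset.mem_univ, if_true,
    Finset.sum_const, Finset.card_univ, Fintype.card_fin, nsmul_eq_mul]
  ring

end ConstAddSingle

namespace perturbedOnes

variable {L : ℕ} {c b : ℝ}

lemma isHermitian : (perturbedOnes L c b).IsHermitian := by
  rw [isHermitian_iff_isSymm]
  refine IsSymm.ext fun i j => ?_
  simp only [perturbedOnes, and_comm]
  ring

lemma ne_zero (hL : 2 ≤ L) : perturbedOnes L c b ≠ 0 := by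
  intro h
  have := congrFun (congrFun h ⟨1, hL⟩) ⟨1, hL⟩
  simp [perturbedOnes] at this

lemma mulVec_apply [NeZero L] (x : Fin L → ℝ) (i : Fin L) :
    (perturbedOnes L c b *ᵥ x) i =
      (1 + if (i : ℕ) = 0 then b else 0) * ∑ j, x j
        + ((if (i : ℕ) = 0 then c else 0) + b) * x 0 := by
  have hentry : ∀ j : Fin L, perturbedOnes L c b i j =
      (1 + if (i : ℕ) = 0 then b else 0)
        + if j = 0 then (if (i : ℕ) = 0 then c else 0) + b else 0 := by
    intro j
    by_cases hj : j = 0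
    · subst hj; simp only [perturbedOnes, Fin.val_zero, and_true, if_true]; ring
    · have hj' : (j : ℕ) ≠ 0 := Fin.val_ne_zero_iff.mpr hj
      simp only [perturbedOnes, hj, hj', and_false, if_false]; ring
  simp only [mulVec, dotProduct, hentry, add_mul, Finset.sum_add_distrib, ← Finset.mul_sum]
  simp only [ite_mul, zero_mul, Finset.sum_ite_eq', Finset.mem_univ, if_true]
  split_ifs <;> ring

variable [NeZero L] {x : Fin L → ℝ} {μ : ℝ}

lemma eq_const_add_ite_zero_of_mulVec_eq_smul (hL : 2 ≤ L)
    (hx : perturbedOnes L c b *ᵥ x = μ • x) (hμ : μ ≠ 0) :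
    ∃ w d : ℝ, x = fun i => w + if i = 0 then d else 0 := by
  have hoff : ∀ i : Fin L, i ≠ 0 → μ * x i = ∑ j, x j + b * x 0 := by
    intro i hi
    have h := congrFun hx i
    rw [mulVec_apply, Pi.smul_apply, smul_eq_mul] at h
    simp only [Fin.val_ne_zero_iff.mpr hi, if_false] at h
    linarith
  set j₁ : Fin L := ⟨1, hL⟩
  have hj₁ : j₁ ≠ 0 := by simp [j₁, Fin.ext_iff]
  refine ⟨x j₁, x 0 - x j₁, funext fun i => ?_⟩
  by_cases hi : i = 0
  · simp [hi]
  · simp only [hi, if_false, add_zero]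
    exact mul_left_cancel₀ hμ ((hoff i hi).trans (hoff j₁ hj₁).symm)

lemma secular_eq {w d : ℝ} (hL : 2 ≤ L)
    (hx : perturbedOnes L c b *ᵥ (fun i => w + if i = 0 then d else 0) =
      μ • fun i => w + if i = 0 then d else 0) :
    d * (L * w + d + b * (w + d)) = w * (b * (L * w + d) + c * (w + d)) := by
  set j₁ : Fin L := ⟨1, hL⟩
  have hj₁ : j₁ ≠ 0 := by simp [j₁, Fin.ext_iff]
  have h₀ := congrFun hx 0
  have h₁ := congrFun hx j₁
  simp only [mulVec_apply, sum_const_add_ite_zero, Pi.smul_apply, smul_eq_mul, Fin.val_zero,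
    if_true, Fin.val_ne_zero_iff.mpr hj₁, hj₁, if_false] at h₀ h₁
  linear_combination (d + w) * h₁ - w * h₀

end perturbedOnes

lemma min_div_le_abs_of_secular {L s a b w d : ℝ} (hL : 2 ≤ L) (hs : s ^ 2 = L) (hs0 : 0 ≤ s)
    (ha : 0 < a) (hb : 0 ≤ b) (hnorm : L * w ^ 2 + 2 * w * d + d ^ 2 = 1)
    (hsec : d * (L * w + d + b * (w + d)) = w * (b * (L * w + d) + a * s * (w + d))) :
    min a 1 / (10 * L) ≤ |d| := by
  by_contra! hsmall
  set m := min a 1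
  have hm0 : 0 < m := lt_min ha one_pos
  have hLd : L * |d| < m / 10 := by
    rw [lt_div_iff₀ (by positivity)] at hsmall; linarith
  have hd : |d| < 1 / 20 := by nlinarith [abs_nonneg d, min_le_right a 1]
  have hw : |w| ≤ 1 := by
    rw [← sq_le_one_iff_abs_le_one]; nlinarith [sq_nonneg (w + d)]
  have hLwd : L * |w * d| < 1 / 10 := by
    have : |w * d| ≤ |d| := by
      rw [abs_mul]; exact mul_le_of_le_one_left (abs_nonneg d) hw
    nlinarith [abs_nonneg (w * d), min_le_right a 1]
  have hLw2 : 17 / 20 ≤ L * w ^ 2 ∧ L * w ^ 2 ≤ 11 / 10 := by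
    have : d ^ 2 ≤ |d| := by rw [← sq_abs]; nlinarith [abs_nonneg d]
    constructor <;> nlinarith [abs_le.mp (le_refl |w * d|)]
  have hsw : s * |w| ≤ 21 / 20 := by
    have : (s * |w|) ^ 2 ≤ (21 / 20) ^ 2 := by rw [mul_pow, sq_abs, hs]; linarith
    exact (pow_le_pow_iff_left₀ (by positivity) (by norm_num) two_ne_zero).mp this
  have hsd : s * |d| ≤ m / 10 := by nlinarith [abs_nonneg d]
  -- `s` times the secular equation; the `b`-part has a sign since `d² < L w²`.
  have hidentity : a * (L * w ^ 2 + L * (w * d)) =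
      s * d * (L * w + d) - b * s * (L * w ^ 2 - d ^ 2) := by
    linear_combination (-s) * hsec - (a * w * (w + d)) * hs
  have hb_part : 0 ≤ b * s * (L * w ^ 2 - d ^ 2) := by
    apply mul_nonneg (mul_nonneg hb hs0); nlinarith [sq_abs d, abs_nonneg d, hLw2.1]
  have ha_part : 3 / 4 * a ≤ a * (L * w ^ 2 + L * (w * d)) := by
    have : 3 / 4 ≤ L * w ^ 2 + L * (w * d) := by
      nlinarith [mul_le_mul_of_nonneg_left (neg_abs_le (w * d)) (by linarith : (0 : ℝ) ≤ L)]
    nlinarith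
  have hd_part : s * d * (L * w + d) ≤ 11 / 100 * m := by
    have h := abs_add_le (L * w) d
    rw [abs_mul L, abs_of_nonneg (by linarith : (0 : ℝ) ≤ L)] at h
    calc s * d * (L * w + d) ≤ s * |d| * |L * w + d| := by
          rw [← abs_of_nonneg hs0, ← abs_mul, ← abs_mul, abs_of_nonneg hs0]
          exact le_abs_self _
      _ ≤ (s * |w|) * (L * |d|) + (s * |d|) * |d| := by
        nlinarith [mul_le_mul_of_nonneg_left h (by positivity : 0 ≤ s * |d|)]
      _ ≤ 21 / 20 * (m / 10) + (m / 10) * (1 / 20) := by gcongr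
      _ = 11 / 100 * m := by ring
  nlinarith [min_le_left a 1]

lemma div_le_sqrt_one_sub_sq {L w d m : ℝ} (hL : 2 ≤ L) (hm : 0 ≤ m)
    (hnorm : L * w ^ 2 + 2 * w * d + d ^ 2 = 1) (hd : m / (10 * L) ≤ |d|) :
    m / (10 * √2 * L) ≤ √(1 - ((L * w + d) / √L) ^ 2) := by
  have hL0 : 0 < L := by linarith
  have hsin : 1 - ((L * w + d) / √L) ^ 2 = (1 - 1 / L) * d ^ 2 := by
    rw [div_pow, Real.sq_sqrt hL0.le]
    field_simp
    linear_combination (-L) * hnorm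
  have hhalf : 1 / 2 ≤ 1 - 1 / L := by
    rw [le_sub_comm, one_div_le hL0 (by norm_num)]; linarith
  rw [hsin, Real.le_sqrt (by positivity) (by nlinarith [sq_nonneg d]), div_pow, mul_pow, mul_pow,
    Real.sq_sqrt zero_le_two]
  have hsq : (m / (10 * L)) ^ 2 ≤ d ^ 2 := by
    rw [← sq_abs d]; exact pow_le_pow_left₀ (by positivity) hd 2
  rw [div_pow, mul_pow] at hsq
  calc m ^ 2 / (10 ^ 2 * 2 * L ^ 2) = 1 / 2 * (m ^ 2 / (10 ^ 2 * L ^ 2)) := by ring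
    _ ≤ (1 - 1 / L) * d ^ 2 := by gcongr

/-- Let `A = 1_L1_Lᵀ + a√L e₁e₁ᵀ + b(e₁1_Lᵀ + 1_Le₁ᵀ)` with `L ≥ 2`, `a > 0`, `b ≥ 0`.
Then any leading eigenvector `û` of `A` (unit eigenvector whose eigenvalue has maximal
absolute value) satisfies `‖sin Θ(û, u)‖ = √(1 − (ûᵀu)²) ≥ (a ∧ 1)/(10√2·L)`,
where `u = L^{-1/2} 1_L`. -/
theorem leading_eigenvector_perturbed_ones {L : ℕ} (hL : 2 ≤ L) (a b : ℝ)
    (ha : 0 < a) (hb : 0 ≤ b)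
    (A : Matrix (Fin L) (Fin L) ℝ)
    (hA : A = fun (i j : Fin L) => 1 + (if (i : ℕ) = 0 ∧ (j : ℕ) = 0 then a * Real.sqrt L else 0)
        + (if (i : ℕ) = 0 then b else 0) + (if (j : ℕ) = 0 then b else 0))
    (uhat : Fin L → ℝ) (hunit : ∑ i, (uhat i) ^ 2 = 1)
    (hlead : ∃ μ : ℝ, A.mulVec uhat = μ • uhat ∧
      ∀ (ν : ℝ) (v : Fin L → ℝ), v ≠ 0 → A.mulVec v = ν • v → |ν| ≤ |μ|) :
    Real.sqrt (1 - (∑ i, uhat i / Real.sqrt L) ^ 2) ≥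
      min a 1 / (10 * Real.sqrt 2 * L) := by
  obtain ⟨μ, hμ, hmax⟩ := hlead
  have : NeZero L := ⟨by omega⟩
  replace hA : A = perturbedOnes L (a * √L) b := hA
  subst hA
  have hμ0 := perturbedOnes.isHermitian.ne_zero_of_forall_abs_eigenvalue_le
    (perturbedOnes.ne_zero hL) hmax
  obtain ⟨w, d, rfl⟩ := perturbedOnes.eq_const_add_ite_zero_of_mulVec_eq_smul hL hμ hμ0
  have hLr : (2 : ℝ) ≤ L := by exact_mod_cast hL
  have hnorm : (L : ℝ) * w ^ 2 + 2 * w * d + d ^ 2 = 1 := by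
    rw [← sum_sq_const_add_ite_zero, hunit]
  have hd := min_div_le_abs_of_secular hLr (Real.sq_sqrt (by positivity)) (Real.sqrt_nonneg _)
    ha hb hnorm (perturbedOnes.secular_eq hL hμ)
  rw [ge_iff_le, ← Finset.sum_div, sum_const_add_ite_zero]
  exact div_le_sqrt_one_sub_sq hLr (by positivity) hnorm hd
end

section
/- Let A = [θw^⊤; I_r] ∈ ℝ^{(r+1)×r} where w ∈ {±1}^r and 0 ≤ θ ≤ 1/√r. Then v = (1+rθ²)^{-1/2}(1, −θw^⊤)^⊤ is a unit vector orthogonal to the column span of A, λ_r(A) ≥ 1, and ‖A‖ ≤ √(1+rθ²) ≤ √2. Moreover, for two sign vectors w, w' ∈ {±1}^r with ‖w−w'‖₂² ≥ r, the column spans U, U' of the corresponding matrices A, A' satisfy ‖sin Θ(U, U')‖ ≥ (θ/(1+rθ²))·‖w − w'‖₂ ≥ √r·θ/2. -/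
open scoped Matrix.Norms.L2Operator
open Matrix

/-! With `c = θ • w`, the vector `(1, -c)` is orthogonal to every column of `A = [cᵀ; I]`, and
`‖A x‖² = ⟪c, x⟫² + ‖x‖²` lies between `‖x‖²` and `(1 + ‖c‖²) ‖x‖² = (1 + rθ²) ‖x‖²` by
Cauchy–Schwarz. For the angle bound, `vᵀ A' = θ (w' - w) / √(1 + rθ²)`. Since `U'` is an isometry,
`‖R' x‖ = ‖A' x‖ ≤ √(1 + rθ²) ‖x‖`, so `‖vᵀ A'‖ = ‖(vᵀ U') R'‖ ≤ √(1 + rθ²) ‖vᵀ U'‖`. -/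

section
variable {m n : Type*} [Fintype m] [Fintype n] [DecidableEq n]

theorem Matrix.l2_opNorm_le_sqrt_of_sum_sq_le (A : Matrix m n ℝ) {s : ℝ} (hs : 0 ≤ s)
    (h : ∀ x, ∑ i, (A *ᵥ x) i ^ 2 ≤ s * ∑ j, x j ^ 2) : ‖A‖ ≤ √s := by
  rw [l2_opNorm_def]
  refine ContinuousLinearMap.opNorm_le_bound _ (Real.sqrt_nonneg s) fun x => ?_
  simp only [LinearEquiv.trans_apply, LinearMap.coe_toContinuousLinearMap',
    toLpLin_apply, EuclideanSpace.norm_eq, Real.norm_eq_abs, sq_abs]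
  rw [← Real.sqrt_mul hs]
  exact Real.sqrt_le_sqrt (h x)

theorem Matrix.sum_sq_mulVec_of_transpose_mul_self_eq_one {U : Matrix m n ℝ}
    (hU : Uᵀ * U = 1) (x : n → ℝ) : ∑ i, (U *ᵥ x) i ^ 2 = ∑ j, x j ^ 2 := by
  simp only [sq, ← dotProduct.eq_1]
  rw [dotProduct_mulVec, ← mulVec_transpose, mulVec_mulVec, hU, one_mulVec, dotProduct_comm]

theorem Matrix.sum_sq_vecMul_mul_le {U : Matrix m n ℝ} {R : Matrix n n ℝ} (hU : Uᵀ * U = 1)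
    {s : ℝ} (hs : 0 ≤ s) (hUR : ∀ x, ∑ i, ((U * R) *ᵥ x) i ^ 2 ≤ s * ∑ j, x j ^ 2)
    (y : m → ℝ) : ∑ j, (y ᵥ* (U * R)) j ^ 2 ≤ s * ∑ j, (y ᵥ* U) j ^ 2 := by
  set u := y ᵥ* U
  set z := y ᵥ* (U * R) with hz
  rw [← vecMul_vecMul] at hz
  have hR : ∑ j, (R *ᵥ z) j ^ 2 ≤ s * ∑ j, z j ^ 2 := by
    rw [← sum_sq_mulVec_of_transpose_mul_self_eq_one hU, mulVec_mulVec]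
    exact hUR z
  -- `‖z‖² = ⟪u, R z⟫`, so Cauchy–Schwarz gives `‖z‖⁴ ≤ ‖u‖² · s ‖z‖²`.
  have hdot : ∑ j, z j ^ 2 = ∑ j, u j * (R *ᵥ z) j := by
    simp only [sq, ← dotProduct.eq_1]
    rw [dotProduct_mulVec, ← hz]
  have hCS : (∑ j, z j ^ 2) ^ 2 ≤ (∑ j, u j ^ 2) * (s * ∑ j, z j ^ 2) :=
    calc (∑ j, z j ^ 2) ^ 2 = (∑ j, u j * (R *ᵥ z) j) ^ 2 := by rw [hdot]
      _ ≤ (∑ j, u j ^ 2) * ∑ j, (R *ᵥ z) j ^ 2 := Finset.sum_mul_sq_le_sq_mul_sq _ _ _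
      _ ≤ (∑ j, u j ^ 2) * (s * ∑ j, z j ^ 2) := by gcongr
  have hz0 : 0 ≤ ∑ j, z j ^ 2 := Finset.sum_nonneg fun _ _ => sq_nonneg _
  have hu0 : 0 ≤ ∑ j, u j ^ 2 := Finset.sum_nonneg fun _ _ => sq_nonneg _
  rcases hz0.eq_or_lt with hz0 | hz0
  · rw [← hz0]; positivity
  · nlinarith

end

theorem sum_sq_smul {ι : Type*} [Fintype ι] (a : ℝ) (x : ι → ℝ) :
    ∑ i, (a • x) i ^ 2 = a ^ 2 * ∑ i, x i ^ 2 := by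
  simp [mul_pow, Finset.mul_sum]

theorem sum_sq_eq_card_of_forall_eq_one_or_neg_one {ι : Type*} [Fintype ι] {w : ι → ℝ}
    (hw : ∀ i, w i = 1 ∨ w i = -1) : ∑ i, w i ^ 2 = Fintype.card ι := by
  have hw2 (i : ι) : w i ^ 2 = 1 := by rcases hw i with h | h <;> simp [h]
  simp [hw2]

theorem mul_sq_le_one_of_le_one_div_sqrt {x θ : ℝ} (hx : 0 ≤ x) (hθ : 0 ≤ θ)
    (h : θ ≤ 1 / √x) : x * θ ^ 2 ≤ 1 := by
  rcases hx.eq_or_lt with rfl | hx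
  · simp
  have : θ * √x ≤ 1 := (le_div_iff₀ (Real.sqrt_pos.2 hx)).1 h
  calc x * θ ^ 2 = (θ * √x) ^ 2 := by rw [mul_pow, Real.sq_sqrt hx.le, mul_comm]
    _ ≤ 1 := pow_le_one₀ (by positivity) this

section
variable {r : ℕ}

def identityWithTopRow (c : Fin r → ℝ) : Matrix (Fin (r + 1)) (Fin r) ℝ :=
  Matrix.of (Fin.cons c (fun i j => if i = j then 1 else 0))

theorem sum_sq_mulVec_identityWithTopRow (c x : Fin r → ℝ) :
    ∑ i, (identityWithTopRow c *ᵥ x) i ^ 2 = (c ⬝ᵥ x) ^ 2 + ∑ j, x j ^ 2 := by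
  simp [Fin.sum_univ_succ, identityWithTopRow, mulVec, dotProduct]

theorem sum_sq_le_sum_sq_mulVec_identityWithTopRow (c x : Fin r → ℝ) :
    ∑ j, x j ^ 2 ≤ ∑ i, (identityWithTopRow c *ᵥ x) i ^ 2 := by
  rw [sum_sq_mulVec_identityWithTopRow]
  exact le_add_of_nonneg_left (sq_nonneg _)

theorem sum_sq_mulVec_identityWithTopRow_le (c x : Fin r → ℝ) :
    ∑ i, (identityWithTopRow c *ᵥ x) i ^ 2 ≤ (1 + ∑ j, c j ^ 2) * ∑ j, x j ^ 2 := by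
  rw [sum_sq_mulVec_identityWithTopRow, add_mul, one_mul, add_comm]
  gcongr
  exact Finset.sum_mul_sq_le_sq_mul_sq _ _ _

theorem sum_sq_cons (a : ℝ) (x : Fin r → ℝ) :
    ∑ i, (Fin.cons a x : Fin (r + 1) → ℝ) i ^ 2 = a ^ 2 + ∑ j, x j ^ 2 := by
  simp [Fin.sum_univ_succ]

theorem cons_one_neg_vecMul_identityWithTopRow (c c' : Fin r → ℝ) :
    (Fin.cons 1 (-c) : Fin (r + 1) → ℝ) ᵥ* identityWithTopRow c' = c' - c := by
  ext j
  simp [Fin.sum_univ_succ, identityWithTopRow, vecMul, dotProduct, ← sub_eq_add_neg]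

theorem sum_sq_mulVec_identityWithTopRow_smul_le {u : Fin r → ℝ}
    (hu : ∀ i, u i = 1 ∨ u i = -1) (θ : ℝ) (x : Fin r → ℝ) :
    ∑ i, (identityWithTopRow (θ • u) *ᵥ x) i ^ 2 ≤ (1 + r * θ ^ 2) * ∑ j, x j ^ 2 := by
  have := sum_sq_mulVec_identityWithTopRow_le (θ • u) x
  rwa [sum_sq_smul, sum_sq_eq_card_of_forall_eq_one_or_neg_one hu, Fintype.card_fin,
    mul_comm (θ ^ 2)] at this

end

theorem sign_vector_span_separation_general {r : ℕ} (θ : ℝ)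
    (hθ : 0 ≤ θ) (hθ' : θ ≤ 1 / Real.sqrt r)
    (w w' : Fin r → ℝ) (hw : ∀ i, w i = 1 ∨ w i = -1) (hw' : ∀ i, w' i = 1 ∨ w' i = -1)
    (A A' : Matrix (Fin (r + 1)) (Fin r) ℝ)
    (hA : A = Matrix.of (Fin.cons (fun j => θ * w j) (fun i j => if i = j then 1 else 0)))
    (hA' : A' = Matrix.of (Fin.cons (fun j => θ * w' j) (fun i j => if i = j then 1 else 0)))
    (v : Fin (r + 1) → ℝ)
    (hv : v = fun i => (Real.sqrt (1 + r * θ ^ 2))⁻¹ * (Fin.cons 1 (fun j => -θ * w j) : Fin (r + 1) → ℝ) i) :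
    (∑ i, (v i) ^ 2 = 1) ∧
    Matrix.vecMul v A = 0 ∧
    (∀ x : Fin r → ℝ, ∑ j, (x j) ^ 2 ≤ ∑ i, (A.mulVec x i) ^ 2) ∧
    ‖A‖ ≤ Real.sqrt (1 + r * θ ^ 2) ∧ Real.sqrt (1 + r * θ ^ 2) ≤ Real.sqrt 2 ∧
    ((r : ℝ) ≤ ∑ i, (w i - w' i) ^ 2 →
      ∀ (U' : Matrix (Fin (r + 1)) (Fin r) ℝ) (R' : Matrix (Fin r) (Fin r) ℝ),
        U'ᵀ * U' = 1 → IsUnit R' → A' = U' * R' →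
        Real.sqrt (∑ k, (Matrix.vecMul v U' k) ^ 2) ≥
            θ * Real.sqrt (∑ i, (w i - w' i) ^ 2) / (1 + r * θ ^ 2) ∧
        θ * Real.sqrt (∑ i, (w i - w' i) ^ 2) / (1 + r * θ ^ 2) ≥ Real.sqrt r * θ / 2) := by
  set s := 1 + r * θ ^ 2
  have hs_le_two : s ≤ 2 := by
    have := mul_sq_le_one_of_le_one_div_sqrt r.cast_nonneg hθ hθ'
    linarith
  have hs_pos : 0 < s := by positivity
  have hw_sq : ∑ j, w j ^ 2 = r := by
    simpa using sum_sq_eq_card_of_forall_eq_one_or_neg_one hw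
  have hA : A = identityWithTopRow (θ • w) := hA
  have hA' : A' = identityWithTopRow (θ • w') := hA'
  have hv : v = (√s)⁻¹ • Fin.cons 1 (-(θ • w)) := by
    rw [hv]; ext i; refine Fin.cases ?_ (fun j => ?_) i <;> simp [s]
  refine ⟨?_, ?_, fun x => hA ▸ sum_sq_le_sum_sq_mulVec_identityWithTopRow _ x, ?_,
    Real.sqrt_le_sqrt hs_le_two, ?_⟩
  · simp only [hv, sum_sq_smul, sum_sq_cons, Pi.neg_apply, neg_sq, one_pow]
    rw [hw_sq, inv_pow, Real.sq_sqrt hs_pos.le, mul_comm (θ ^ 2), inv_mul_cancel₀ hs_pos.ne']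
  · rw [hv, hA, smul_vecMul, cons_one_neg_vecMul_identityWithTopRow, sub_self, smul_zero]
  · exact hA ▸ l2_opNorm_le_sqrt_of_sum_sq_le _ hs_pos.le
      (sum_sq_mulVec_identityWithTopRow_smul_le hw θ)
  intro hD U' R' hU _ hfac
  set D := ∑ i, (w i - w' i) ^ 2
  have hz : ∑ j, (v ᵥ* A') j ^ 2 = θ ^ 2 * D / s := by
    simp only [hv, hA', smul_vecMul, cons_one_neg_vecMul_identityWithTopRow, ← smul_sub,
      sum_sq_smul, inv_pow, Real.sq_sqrt hs_pos.le, Pi.sub_apply, sub_sq_comm (w' _), D]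
    ring
  have hA'_bound := sum_sq_mulVec_identityWithTopRow_smul_le hw' θ
  rw [← hA', hfac] at hA'_bound
  have hsin := sum_sq_vecMul_mul_le hU hs_pos.le hA'_bound v
  rw [← hfac, hz, div_le_iff₀ hs_pos] at hsin
  refine ⟨?_, div_le_div₀ (by positivity) ?_ (by positivity) hs_le_two⟩
  · rw [ge_iff_le, Real.le_sqrt (by positivity) (by positivity), div_pow, mul_pow,
      Real.sq_sqrt (by positivity), div_le_iff₀ (by positivity)]
    linarith
  · rw [mul_comm]
    exact mul_le_mul_of_nonneg_left (Real.sqrt_le_sqrt hD) hθ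

/-- Let `A = [θwᵀ; I_r] ∈ ℝ^{(r+1)×r}` with `w ∈ {±1}^r` and `0 ≤ θ ≤ 1/√r`.  Then
`v = (1+rθ²)^{-1/2}(1, −θwᵀ)ᵀ` is a unit vector orthogonal to the column span of `A`,
the least singular value of `A` is at least `1` (i.e. `‖Ax‖ ≥ ‖x‖` for all `x`), and
`‖A‖ ≤ √(1+rθ²) ≤ √2`.  Moreover, for `w' ∈ {±1}^r` with `‖w−w'‖₂² ≥ r` and `U'` an
orthonormal basis of the column span of the corresponding `A' = U'R'` (`R'` invertible),
`‖sin Θ(U,U')‖ = ‖vᵀU'‖ ≥ θ‖w−w'‖₂/(1+rθ²) ≥ √r·θ/2`. -/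
theorem sign_vector_span_separation {r : ℕ} (hr : 0 < r) (θ : ℝ)
    (hθ : 0 ≤ θ) (hθ' : θ ≤ 1 / Real.sqrt r)
    (w w' : Fin r → ℝ) (hw : ∀ i, w i = 1 ∨ w i = -1) (hw' : ∀ i, w' i = 1 ∨ w' i = -1)
    (A A' : Matrix (Fin (r + 1)) (Fin r) ℝ)
    (hA : A = Matrix.of (Fin.cons (fun j => θ * w j) (fun i j => if i = j then 1 else 0)))
    (hA' : A' = Matrix.of (Fin.cons (fun j => θ * w' j) (fun i j => if i = j then 1 else 0)))
    (v : Fin (r + 1) → ℝ)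
    (hv : v = fun i => (Real.sqrt (1 + r * θ ^ 2))⁻¹ * (Fin.cons 1 (fun j => -θ * w j) : Fin (r + 1) → ℝ) i) :
    (∑ i, (v i) ^ 2 = 1) ∧
    Matrix.vecMul v A = 0 ∧
    (∀ x : Fin r → ℝ, ∑ j, (x j) ^ 2 ≤ ∑ i, (A.mulVec x i) ^ 2) ∧
    ‖A‖ ≤ Real.sqrt (1 + r * θ ^ 2) ∧ Real.sqrt (1 + r * θ ^ 2) ≤ Real.sqrt 2 ∧
    ((r : ℝ) ≤ ∑ i, (w i - w' i) ^ 2 →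
      ∀ (U' : Matrix (Fin (r + 1)) (Fin r) ℝ) (R' : Matrix (Fin r) (Fin r) ℝ),
        U'ᵀ * U' = 1 → IsUnit R' → A' = U' * R' →
        Real.sqrt (∑ k, (Matrix.vecMul v U' k) ^ 2) ≥
            θ * Real.sqrt (∑ i, (w i - w' i) ^ 2) / (1 + r * θ ^ 2) ∧
        θ * Real.sqrt (∑ i, (w i - w' i) ^ 2) / (1 + r * θ ^ 2) ≥ Real.sqrt r * θ / 2) :=
  sign_vector_span_separation_general θ hθ hθ' w w' hw hw' A A' hA hA' v hv
end

section
/- Let Σ = uu^⊤ where u ∈ ℝ^p is a unit vector of the form u = (2/√(5L))·1 on the first L coordinates, (1/√(5L))·1 on the next L coordinates, and 0 elsewhere (p ≥ 2L). Let R = Δ(uu^⊤) be uu^⊤ with its diagonal zeroed. Then u is not an eigenvector of R, and consequently the leading eigenvector û of R satisfies ‖sin Θ(û, u)‖ = √(1 − (û^⊤u)²) ≥ c for some constant c > 0 depending only on L. -/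
/-! Write `R = Δ(uuᵀ) = uuᵀ - diag(u_k²)`. An eigenvector `x` of `R` with eigenvalue `μ` satisfies
`(μ + u_k²) x_k = ⟨u, x⟩ u_k` for every `k`. For `x = u` this forces `u_k²` to be constant on the
support of `u`, which fails as soon as `u` takes two values of different modulus.

For a unit eigenvector `x`, the Rayleigh quotient `μ = ⟨u, x⟩² - ∑ u_k² x_k²` lies in `[-1, 1]`.
Comparing two coordinates `i, j` gives
`(μ + u_i²)(μ + u_j²)(u_j x_i - u_i x_j) = ⟨u, x⟩ u_i u_j (u_j² - u_i²)`,
and `u_j x_i - u_i x_j` only sees the component `x - ⟨u, x⟩ u` of `x` orthogonal to `u`, whose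
squared norm is `1 - ⟨u, x⟩²`. Hence `⟨u, x⟩²` is bounded away from `1` in terms of
`u_i² u_j² (u_i² - u_j²)²` alone, independently of the dimension. -/

open Matrix

open Finset

theorem sum_range_ite_lt_ite_lt {L p : ℕ} (h : 2 * L ≤ p) (A B : ℝ) :
    ∑ i ∈ range p, (if i < L then A else if i < 2 * L then B else 0) = L * A + L * B := by
  rw [← sum_range_add_sum_Ico _ h, ← sum_range_add_sum_Ico _ (by omega : L ≤ 2 * L)]
  have h₁ : ∑ i ∈ range L, (if i < L then A else if i < 2 * L then B else 0) = L * A := by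
    rw [sum_congr rfl fun i hi => if_pos (mem_range.1 hi), sum_const, card_range, nsmul_eq_mul]
  have h₂ : ∑ i ∈ Ico L (2 * L), (if i < L then A else if i < 2 * L then B else 0) = L * B := by
    rw [sum_congr rfl fun i hi =>
        (if_neg (not_lt.2 (mem_Ico.1 hi).1)).trans (if_pos (mem_Ico.1 hi).2),
      sum_const, Nat.card_Ico, nsmul_eq_mul, show 2 * L - L = L by omega]
  have h₃ : ∑ i ∈ Ico (2 * L) p, (if i < L then A else if i < 2 * L then B else 0) = 0 :=
    sum_eq_zero fun i hi => by rw [mem_Ico] at hi; rw [if_neg (by omega), if_neg (by omega)]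
  rw [h₁, h₂, h₃, add_zero]

theorem sq_le_one_of_sum_sq_eq_one {ι : Type*} [Fintype ι] {u : ι → ℝ} (hu : ∑ i, u i ^ 2 = 1)
    (i : ι) : u i ^ 2 ≤ 1 :=
  hu ▸ single_le_sum (fun j _ => sq_nonneg (u j)) (mem_univ i)

namespace Matrix

variable {p : ℕ}

theorem offDiag'_vecMulVec_mulVec_apply (u v x : Fin p → ℝ) (i : Fin p) :
    (offDiag' (vecMulVec u v) *ᵥ x) i = u i * (v ⬝ᵥ x - v i * x i) := by
  have hsplit : ∀ j, offDiag' (vecMulVec u v) i j * x j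
      = u i * (v j * x j) - if i = j then u i * (v i * x i) else 0 := by
    intro j
    rcases eq_or_ne i j with rfl | hij
    · simp [offDiag']
    · simp [offDiag', vecMulVec, hij, mul_assoc]
  simp only [mulVec, dotProduct, hsplit, sum_sub_distrib, sum_ite_eq, mem_univ, if_true,
    ← mul_sum]
  ring

theorem offDiag'_vecMulVec_self_mulVec_self_ne_smul {u : Fin p → ℝ} {i j : Fin p}
    (hi : u i ≠ 0) (hj : u j ≠ 0) (hij : u i ^ 2 ≠ u j ^ 2) (μ : ℝ) :
    offDiag' (vecMulVec u u) *ᵥ u ≠ μ • u := by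
  intro h
  have heq : ∀ k, u k ≠ 0 → u ⬝ᵥ u - u k ^ 2 = μ := fun k hk =>
    mul_left_cancel₀ hk <| by
      simpa [offDiag'_vecMulVec_mulVec_apply, sq, mul_comm] using congrFun h k
  exact hij (by linarith [heq i hi, heq j hj])

theorem offDiag'_vecMulVec_self_eigen_apply {u x : Fin p → ℝ} {μ : ℝ}
    (hμ : offDiag' (vecMulVec u u) *ᵥ x = μ • x) (i : Fin p) :
    (μ + u i ^ 2) * x i = (u ⬝ᵥ x) * u i := by
  have := congrFun hμ i
  rw [offDiag'_vecMulVec_mulVec_apply, Pi.smul_apply, smul_eq_mul] at this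
  linear_combination -this

theorem abs_le_one_of_offDiag'_vecMulVec_self_eigen {u x : Fin p → ℝ} {μ : ℝ}
    (hμ : offDiag' (vecMulVec u u) *ᵥ x = μ • x) (hu : ∑ i, u i ^ 2 = 1)
    (hx : ∑ i, x i ^ 2 = 1) : |μ| ≤ 1 := by
  have hrayleigh : μ + ∑ i, u i ^ 2 * x i ^ 2 = (u ⬝ᵥ x) ^ 2 :=
    calc μ + ∑ i, u i ^ 2 * x i ^ 2 = ∑ i, (μ + u i ^ 2) * x i * x i := by
          simp only [add_mul, sum_add_distrib, mul_assoc, ← mul_sum, ← sq, hx, mul_one]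
      _ = (u ⬝ᵥ x) ^ 2 := by
          simp only [offDiag'_vecMulVec_self_eigen_apply hμ, mul_assoc, ← mul_sum]
          exact (sq _).symm
  have hcs : (u ⬝ᵥ x) ^ 2 ≤ 1 := by
    simpa only [dotProduct, hu, hx, mul_one] using sum_mul_sq_le_sq_mul_sq univ u x
  have hux : ∑ i, u i ^ 2 * x i ^ 2 ≤ ∑ i, x i ^ 2 := by
    gcongr with i
    exact mul_le_of_le_one_left (sq_nonneg _) (sq_le_one_of_sum_sq_eq_one hu i)
  have := sum_nonneg fun i (_ : i ∈ univ) => mul_nonneg (sq_nonneg (u i)) (sq_nonneg (x i))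
  rw [abs_le]
  constructor <;> nlinarith [sq_nonneg (u ⬝ᵥ x)]

theorem sq_dotProduct_mul_le_of_offDiag'_vecMulVec_self_eigen {u x : Fin p → ℝ} {μ : ℝ}
    (hμ : offDiag' (vecMulVec u u) *ᵥ x = μ • x) (hu : ∑ i, u i ^ 2 = 1)
    (hx : ∑ i, x i ^ 2 = 1) {i j : Fin p} (hij : i ≠ j) :
    (u ⬝ᵥ x) ^ 2 * (u i ^ 2 * u j ^ 2 * (u i ^ 2 - u j ^ 2) ^ 2)
      ≤ 16 * (u i ^ 2 + u j ^ 2) * (1 - (u ⬝ᵥ x) ^ 2) := by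
  set t := u ⬝ᵥ x
  have hw : ∑ k, (x k - t * u k) ^ 2 = 1 - t ^ 2 := by
    have hxu : ∑ k, x k * u k = t := by simp only [t, dotProduct, mul_comm]
    have hexpand : ∀ k, (x k - t * u k) ^ 2 = x k ^ 2 - 2 * t * (x k * u k) + t ^ 2 * u k ^ 2 :=
      fun k => by ring
    simp only [hexpand, sum_add_distrib, sum_sub_distrib, ← mul_sum, hx, hu, hxu]
    ring
  have hwij : (x i - t * u i) ^ 2 + (x j - t * u j) ^ 2 ≤ 1 - t ^ 2 := by
    rw [← hw, ← sum_pair hij (f := fun k => (x k - t * u k) ^ 2)]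
    exact sum_le_univ_sum_of_nonneg fun k => sq_nonneg _
  have hc : ∀ k, (μ + u k ^ 2) ^ 2 ≤ 4 := fun k => by
    have := abs_le.1 (abs_le_one_of_offDiag'_vecMulVec_self_eigen hμ hu hx)
    nlinarith [sq_le_one_of_sum_sq_eq_one hu k, sq_nonneg (u k)]
  have hcij : ((μ + u i ^ 2) * (μ + u j ^ 2)) ^ 2 ≤ 16 := by
    rw [mul_pow]; nlinarith [hc i, hc j, sq_nonneg (μ + u i ^ 2), sq_nonneg (μ + u j ^ 2)]
  have hkey : (μ + u i ^ 2) * (μ + u j ^ 2) * (u j * x i - u i * x j)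
      = t * u i * u j * (u j ^ 2 - u i ^ 2) := by
    linear_combination (μ + u j ^ 2) * u j * offDiag'_vecMulVec_self_eigen_apply hμ i
      - (μ + u i ^ 2) * u i * offDiag'_vecMulVec_self_eigen_apply hμ j
  have hcs : (u j * x i - u i * x j) ^ 2
      ≤ (u i ^ 2 + u j ^ 2) * ((x i - t * u i) ^ 2 + (x j - t * u j) ^ 2) := by
    nlinarith [sq_nonneg (u i * (x i - t * u i) + u j * (x j - t * u j))]
  calc t ^ 2 * (u i ^ 2 * u j ^ 2 * (u i ^ 2 - u j ^ 2) ^ 2)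
      = ((μ + u i ^ 2) * (μ + u j ^ 2)) ^ 2 * (u j * x i - u i * x j) ^ 2 := by
        rw [← mul_pow ((μ + u i ^ 2) * (μ + u j ^ 2)), hkey]; ring
    _ ≤ 16 * ((u i ^ 2 + u j ^ 2) * (1 - t ^ 2)) := by
        gcongr
        exact hcs.trans (by gcongr)
    _ = 16 * (u i ^ 2 + u j ^ 2) * (1 - t ^ 2) := by ring

end Matrix

noncomputable def twoBlockVector (L p : ℕ) : Fin p → ℝ := fun i =>
  if (i : ℕ) < L then 2 / √(5 * L) else if (i : ℕ) < 2 * L then 1 / √(5 * L) else 0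

theorem twoBlockVector_sq_apply {L p : ℕ} (i : Fin p) :
    twoBlockVector L p i ^ 2
      = if (i : ℕ) < L then 4 / (5 * L : ℝ)
        else if (i : ℕ) < 2 * L then 1 / (5 * L : ℝ) else 0 := by
  have h5L : √(5 * L : ℝ) ^ 2 = 5 * L := Real.sq_sqrt (by positivity)
  simp only [twoBlockVector, apply_ite (· ^ 2), div_pow, h5L]
  norm_num

theorem twoBlockVector_sq_of_lt {L p : ℕ} {i : Fin p} (hi : (i : ℕ) < L) :
    twoBlockVector L p i ^ 2 = 4 / (5 * L) := by
  simp [twoBlockVector_sq_apply, hi]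

theorem twoBlockVector_sq_of_le_of_lt {L p : ℕ} {i : Fin p} (hi₁ : L ≤ i)
    (hi₂ : (i : ℕ) < 2 * L) :
    twoBlockVector L p i ^ 2 = 1 / (5 * L) := by
  simp [twoBlockVector_sq_apply, not_lt.2 hi₁, hi₂]

theorem sum_twoBlockVector_sq {L p : ℕ} (hL : L ≠ 0) (h : 2 * L ≤ p) :
    ∑ i, twoBlockVector L p i ^ 2 = 1 := by
  simp only [twoBlockVector_sq_apply]
  rw [Fin.sum_univ_eq_sum_range (fun i => if i < L then _ else if i < 2 * L then _ else 0),
    sum_range_ite_lt_ite_lt h]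
  field_simp
  norm_num

theorem offDiag'_vecMulVec_twoBlockVector_mulVec_ne_smul {L p : ℕ} (hL : L ≠ 0) (hp : 2 * L ≤ p)
    (μ : ℝ) : offDiag' (vecMulVec (twoBlockVector L p) (twoBlockVector L p)) *ᵥ
      twoBlockVector L p ≠ μ • twoBlockVector L p := by
  have h₀ := twoBlockVector_sq_of_lt (p := p) (i := ⟨0, by omega⟩) (Nat.pos_of_ne_zero hL)
  have h₁ := twoBlockVector_sq_of_le_of_lt (p := p) (i := ⟨L, by omega⟩) le_rfl (by simp; omega)
  have hL' : (0 : ℝ) < L := by positivity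
  refine offDiag'_vecMulVec_self_mulVec_self_ne_smul
    ((pow_ne_zero_iff two_ne_zero).1 (by rw [h₀]; positivity))
    ((pow_ne_zero_iff two_ne_zero).1 (by rw [h₁]; positivity)) ?_ μ
  rw [h₀, h₁]
  exact fun h => by field_simp at h; norm_num at h

theorem mul_sq_dotProduct_twoBlockVector_le {L p : ℕ} (hL : L ≠ 0) (hp : 2 * L ≤ p)
    {x : Fin p → ℝ} {μ : ℝ}
    (hμ : offDiag' (vecMulVec (twoBlockVector L p) (twoBlockVector L p)) *ᵥ x = μ • x)
    (hx : ∑ i, x i ^ 2 = 1) :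
    9 / (2500 * L ^ 3) * (twoBlockVector L p ⬝ᵥ x) ^ 2 ≤ 1 - (twoBlockVector L p ⬝ᵥ x) ^ 2 := by
  have hL' : (0 : ℝ) < L := by positivity
  have key := sq_dotProduct_mul_le_of_offDiag'_vecMulVec_self_eigen hμ
    (sum_twoBlockVector_sq hL hp) hx (i := ⟨0, by omega⟩) (j := ⟨L, by omega⟩)
    (by simp [Fin.ext_iff]; omega)
  rw [twoBlockVector_sq_of_lt (Nat.pos_of_ne_zero hL),
    twoBlockVector_sq_of_le_of_lt (L := L) le_rfl (by simp; omega)] at key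
  set t := twoBlockVector L p ⬝ᵥ x
  have e₁ : t ^ 2 * (4 / (5 * L) * (1 / (5 * L)) * (4 / (5 * L) - 1 / (5 * L)) ^ 2)
      = 16 / L * (9 / (2500 * L ^ 3) * t ^ 2) := by
    field_simp; ring
  have e₂ : 16 * (4 / (5 * L) + 1 / (5 * L)) * (1 - t ^ 2) = 16 / L * (1 - t ^ 2) := by
    field_simp; ring
  rw [e₁, e₂] at key
  exact le_of_mul_le_mul_left key (by positivity)

/-- Inconsistency of diagonal-deletion SVD: let `u ∈ ℝ^p` be the unit vector which equals
`2/√(5L)` on the first `L` coordinates, `1/√(5L)` on the next `L` coordinates, and `0`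
elsewhere (`p ≥ 2L ≥ 2`), and let `R = Δ(uuᵀ)` be `uuᵀ` with zeroed diagonal.  Then `u` is
not an eigenvector of `R`, and there is a constant `c > 0` depending only on `L` such that
every leading eigenvector `û` of `R` (unit eigenvector of the eigenvalue of maximal
absolute value) satisfies `‖sin Θ(û, u)‖ = √(1 − (ûᵀu)²) ≥ c`. -/
theorem diagonal_deletion_inconsistent (L : ℕ) (hL : 1 ≤ L) :
    (∀ (p : ℕ), 2 * L ≤ p → ∀ u : Fin p → ℝ,
      (u = fun (i : Fin p) => if (i : ℕ) < L then 2 / Real.sqrt (5 * L)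
        else if (i : ℕ) < 2 * L then 1 / Real.sqrt (5 * L) else 0) →
      ¬ ∃ μ : ℝ, (Matrix.offDiag' (Matrix.vecMulVec u u)).mulVec u = μ • u) ∧
    ∃ c : ℝ, 0 < c ∧
      ∀ (p : ℕ), 2 * L ≤ p → ∀ u : Fin p → ℝ,
        (u = fun (i : Fin p) => if (i : ℕ) < L then 2 / Real.sqrt (5 * L)
          else if (i : ℕ) < 2 * L then 1 / Real.sqrt (5 * L) else 0) →
        ∀ uhat : Fin p → ℝ, (∑ i, (uhat i) ^ 2 = 1) →
          (∃ μ : ℝ, (Matrix.offDiag' (Matrix.vecMulVec u u)).mulVec uhat = μ • uhat ∧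
            ∀ (ν : ℝ) (x : Fin p → ℝ), x ≠ 0 →
              (Matrix.offDiag' (Matrix.vecMulVec u u)).mulVec x = ν • x → |ν| ≤ |μ|) →
          c ≤ Real.sqrt (1 - (∑ i, uhat i * u i) ^ 2) := by
  set κ : ℝ := 9 / (2500 * L ^ 3)
  refine ⟨fun p hp u hu ⟨μ, hμ⟩ => ?_, √(κ / (1 + κ)), by positivity,
    fun p hp u hu uhat huhat ⟨μ, hμ, _⟩ => ?_⟩
  · obtain rfl : u = twoBlockVector L p := hu
    exact offDiag'_vecMulVec_twoBlockVector_mulVec_ne_smul (by omega) hp μ hμ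
  · obtain rfl : u = twoBlockVector L p := hu
    have hκ := mul_sq_dotProduct_twoBlockVector_le (by omega) hp hμ huhat
    rw [dotProduct_comm] at hκ
    apply Real.sqrt_le_sqrt
    rw [div_le_iff₀ (by positivity)]
    change κ ≤ (1 - (uhat ⬝ᵥ twoBlockVector L p) ^ 2) * (1 + κ)
    linarith
end
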